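/- Suppose s ≥ 3 and r ≥ s+1. Then the series ∑_{k≥1} λ_k·δ_k² converges, and ∑_{k=1}^∞ λ_k·δ_k² = ln( r·(rs−r−s) / ((r−2)·√(Q(r,s)) ) ). -/

import Mathlib

/-!
Write `x = 1 / ((r-1)(s-1))` and `p_k = ζ₁^k + ζ₂^k`. Since `ζ₁ + ζ₂` and `ζ₁ζ₂` are real,
the roots are real or conjugate, so `p_k` is real and `λ_k δ_k² = (p_k - 1)² x^k / (2k)`.
Expanding the square, `(p_k - 1)² = (ζ₁²)^k + (ζ₂²)^k + 2 (ζ₁ζ₂)^k - 2 p_k + 1`, and every term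
is a Taylor coefficient of `-log (1 - ·)`; the series thus sums to a combination of logarithms
of the real quadratics `(1 - ζ₁ y)(1 - ζ₂ y)`, which are rational functions of `r, s`.
Convergence needs `|ζᵢ|² < (r-1)(s-1)`: real roots share a sign, so `|ζᵢ| ≤ |ζ₁ + ζ₂| ≤ s - 1`,
while conjugate roots have `|ζᵢ|² = ζ₁ζ₂`.
-/

open Complex ComplexConjugate

namespace Complex

variable {ζ₁ ζ₂ : ℂ} {σ P : ℝ}

theorem im_eq_zero_or_eq_conj_of_add_of_mul (hσ : ζ₁ + ζ₂ = σ) (hP : ζ₁ * ζ₂ = P) :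
    (ζ₁.im = 0 ∧ ζ₂.im = 0) ∨ ζ₂ = conj ζ₁ := by
  have him_add : ζ₁.im + ζ₂.im = 0 := by simpa using congrArg im hσ
  have him_mul : ζ₁.re * ζ₂.im + ζ₁.im * ζ₂.re = 0 := by simpa using congrArg im hP
  have : ζ₁.im * (ζ₂.re - ζ₁.re) = 0 := by linear_combination him_mul - ζ₁.re * him_add
  rcases mul_eq_zero.1 this with h | h
  · exact .inl ⟨h, by linarith⟩
  · exact .inr (Complex.ext (by simp; linarith) (by simp; linarith))

theorem im_pow_add_pow_eq_zero (hσ : ζ₁ + ζ₂ = σ) (hP : ζ₁ * ζ₂ = P) (n : ℕ) :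
    (ζ₁ ^ n + ζ₂ ^ n).im = 0 := by
  rcases im_eq_zero_or_eq_conj_of_add_of_mul hσ hP with ⟨h₁, h₂⟩ | rfl
  · rw [← conj_eq_iff_im] at h₁ h₂ ⊢
    rw [map_add, map_pow, map_pow, h₁, h₂]
  · rw [← map_pow, add_conj, ofReal_im]

theorem normSq_le_max_of_add_of_mul (hσ : ζ₁ + ζ₂ = σ) (hP : ζ₁ * ζ₂ = P) (hP₀ : 0 ≤ P) :
    normSq ζ₁ ≤ max (σ ^ 2) P := by
  rcases im_eq_zero_or_eq_conj_of_add_of_mul hσ hP with ⟨h₁, h₂⟩ | rfl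
  · have hre_add : ζ₁.re + ζ₂.re = σ := by simpa using congrArg re hσ
    have hre_mul : ζ₁.re * ζ₂.re = P := by simpa [h₁, h₂] using congrArg re hP
    subst hre_add
    rw [normSq_apply, h₁]
    exact le_max_of_le_left (by nlinarith [sq_nonneg ζ₂.re])
  · exact le_max_of_le_right (ofReal_injective ((mul_conj ζ₁).symm.trans hP)).le

theorem hasSum_re_pow_add_pow_mul_div (hσ : ζ₁ + ζ₂ = σ) (hP : ζ₁ * ζ₂ = P) {x : ℝ}
    (h₁ : ‖ζ₁‖ * |x| < 1) (h₂ : ‖ζ₂‖ * |x| < 1) :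
    HasSum (fun n : ℕ => (ζ₁ ^ (n + 1) + ζ₂ ^ (n + 1)).re * x ^ (n + 1) / (n + 1))
      (-Real.log (1 - σ * x + P * x ^ 2)) := by
  have hz₁ : ‖ζ₁ * x‖ < 1 := by rwa [norm_mul, norm_real, Real.norm_eq_abs]
  have hz₂ : ‖ζ₂ * x‖ < 1 := by rwa [norm_mul, norm_real, Real.norm_eq_abs]
  have hne : ∀ z : ℂ, ‖z‖ < 1 → ‖1 - z‖ ≠ 0 := fun z hz => by
    rw [norm_ne_zero_iff, sub_ne_zero]; rintro rfl; simp at hz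
  have hprod : (1 - ζ₁ * x) * (1 - ζ₂ * x) = ((1 - σ * x + P * x ^ 2 : ℝ) : ℂ) := by
    push_cast; linear_combination (-(x : ℂ)) * hσ + (x : ℂ) ^ 2 * hP
  convert hasSum_re ((hasSum_taylorSeries_neg_log' hz₁).add (hasSum_taylorSeries_neg_log' hz₂))
    using 1
  · funext n
    have : (ζ₁ * x) ^ (n + 1) / (n + 1) + (ζ₂ * x) ^ (n + 1) / (n + 1)
        = (ζ₁ ^ (n + 1) + ζ₂ ^ (n + 1)) * ((x ^ (n + 1) / (n + 1) : ℝ) : ℂ) := by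
      push_cast; ring
    rw [this, re_mul_ofReal, mul_div_assoc]
  · rw [add_re, neg_re, neg_re, log_re, log_re, ← neg_add, ← Real.log_mul (hne _ hz₁) (hne _ hz₂),
      ← norm_mul, hprod, norm_real, Real.norm_eq_abs, Real.log_abs]

theorem sq_re_pow_add_pow (hσ : ζ₁ + ζ₂ = σ) (hP : ζ₁ * ζ₂ = P) (n : ℕ) :
    (ζ₁ ^ n + ζ₂ ^ n).re ^ 2 = ((ζ₁ ^ 2) ^ n + (ζ₂ ^ 2) ^ n).re + 2 * P ^ n := by
  have hsq : (ζ₁ ^ n + ζ₂ ^ n) ^ 2 = (ζ₁ ^ 2) ^ n + (ζ₂ ^ 2) ^ n + ((2 * P ^ n : ℝ) : ℂ) := by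
    push_cast; rw [← hP]; ring
  calc (ζ₁ ^ n + ζ₂ ^ n).re ^ 2 = ((ζ₁ ^ n + ζ₂ ^ n) ^ 2).re := by
        rw [sq, sq, mul_re, im_pow_add_pow_eq_zero hσ hP, mul_zero, sub_zero]
    _ = _ := by rw [hsq, add_re, ofReal_re]

theorem hasSum_re_pow_add_pow_sub_one_sq_mul_div (hσ : ζ₁ + ζ₂ = σ) (hP : ζ₁ * ζ₂ = P) {x : ℝ}
    (h₁ : ‖ζ₁‖ ^ 2 * |x| < 1) (h₂ : ‖ζ₂‖ ^ 2 * |x| < 1) (hx : |x| < 1) :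
    HasSum (fun n : ℕ => ((ζ₁ ^ (n + 1) + ζ₂ ^ (n + 1)).re - 1) ^ 2 * x ^ (n + 1) / (n + 1))
      (2 * Real.log (1 - σ * x + P * x ^ 2) - Real.log (1 - (σ ^ 2 - 2 * P) * x + P ^ 2 * x ^ 2)
        - 2 * Real.log (1 - P * x) - Real.log (1 - x)) := by
  have h₁' : ‖ζ₁‖ * |x| < 1 := by nlinarith [norm_nonneg ζ₁, abs_nonneg x]
  have h₂' : ‖ζ₂‖ * |x| < 1 := by nlinarith [norm_nonneg ζ₂, abs_nonneg x]
  have hPx : |P * x| < 1 := by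
    have hPn : |P| = ‖ζ₁‖ * ‖ζ₂‖ := by rw [← Real.norm_eq_abs, ← norm_real, ← hP, norm_mul]
    rw [← sq_lt_one_iff_abs_lt_one, ← sq_abs, abs_mul, hPn]
    calc (‖ζ₁‖ * ‖ζ₂‖ * |x|) ^ 2 = (‖ζ₁‖ ^ 2 * |x|) * (‖ζ₂‖ ^ 2 * |x|) := by ring
      _ < 1 := mul_lt_one_of_nonneg_of_lt_one_left (by positivity) h₁ h₂.le
  have hsq := hasSum_re_pow_add_pow_mul_div (ζ₁ := ζ₁ ^ 2) (ζ₂ := ζ₂ ^ 2) (σ := σ ^ 2 - 2 * P)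
    (P := P ^ 2) (by push_cast; linear_combination (ζ₁ + ζ₂ + σ) * hσ - 2 * hP)
    (by push_cast; linear_combination (ζ₁ * ζ₂ + P) * hP)
    (by rwa [norm_pow]) (by rwa [norm_pow])
  have hlin := hasSum_re_pow_add_pow_mul_div hσ hP h₁' h₂'
  have hsum := ((hsq.add ((Real.hasSum_pow_div_log_of_abs_lt_one hPx).mul_left 2)).add
    (hlin.mul_left (-2))).add (Real.hasSum_pow_div_log_of_abs_lt_one hx)
  convert hsum using 1
  · funext n
    rw [sub_sq, sq_re_pow_add_pow hσ hP (n + 1)]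
    ring
  · ring

end Complex

noncomputable def rootSum (r s : ℝ) : ℝ :=
  -(r * s ^ 2 - s ^ 2 - 2 * r * s + r + 2) / (r * s - r - s)

noncomputable def rootProd (r s : ℝ) : ℝ := (s - 1) * (s - 2) * (r - 1) / (r * s - r - s)

noncomputable def Q (r s : ℝ) : ℝ :=
  r ^ 2 * s ^ 2 - r * s ^ 3 - 2 * r ^ 2 * s + 3 * r * s ^ 2 + s ^ 3 + r ^ 2 - 6 * r * s + 4 * r
    - 4 * s + 4

section Parameters

variable {r s : ℝ}

theorem rootSum_eq_neg_add_div (hm : r * s - r - s ≠ 0) :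
    rootSum r s = -(s - 1) + (s - 2) / (r * s - r - s) := by
  rw [rootSum, add_div' _ _ _ hm]; ring

theorem mul_sub_sub_pos_of_three_le (hs : 3 ≤ s) (hr : s + 1 ≤ r) : 0 < r * s - r - s := by
  nlinarith

theorem rootSum_sq_lt (hs : 3 ≤ s) (hr : s + 1 ≤ r) :
    rootSum r s ^ 2 < (r - 1) * (s - 1) := by
  have hm := mul_sub_sub_pos_of_three_le hs hr
  have hq : (s - 2) / (r * s - r - s) ≤ 1 := by rw [div_le_one hm]; nlinarith
  have hq₀ : 0 ≤ (s - 2) / (r * s - r - s) := div_nonneg (by linarith) hm.le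
  calc rootSum r s ^ 2 = (s - 1 - (s - 2) / (r * s - r - s)) ^ 2 := by
        rw [rootSum_eq_neg_add_div hm.ne']; ring
    _ ≤ (s - 1) ^ 2 := by nlinarith
    _ < (r - 1) * (s - 1) := by nlinarith

theorem rootProd_nonneg (hs : 3 ≤ s) (hr : s + 1 ≤ r) : 0 ≤ rootProd r s :=
  div_nonneg (mul_nonneg (mul_nonneg (by linarith) (by linarith)) (by linarith))
    (mul_sub_sub_pos_of_three_le hs hr).le

theorem rootProd_lt (hs : 3 ≤ s) (hr : s + 1 ≤ r) :
    rootProd r s < (r - 1) * (s - 1) := by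
  have hm := mul_sub_sub_pos_of_three_le hs hr
  rw [rootProd, div_lt_iff₀ hm]
  have : 0 < (r - 1) * (s - 1) * (r * s - r - s - (s - 2)) := by
    apply mul_pos <;> nlinarith
  linarith

theorem Q_pos (hs : 3 ≤ s) (hr : s + 1 ≤ r) : 0 < Q r s := by
  have hQ : Q r s = (s - 1) * r * ((s - 1) * r - (s ^ 2 - 2 * s + 4)) + s * (s ^ 2 - 4) + 4 := by
    rw [Q]; ring
  have h₁ : 0 < (s - 1) * r := by nlinarith
  have h₂ : 0 < (s - 1) * r - (s ^ 2 - 2 * s + 4) := by nlinarith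
  have h₃ : 0 < s * (s ^ 2 - 4) := by nlinarith
  rw [hQ]
  nlinarith [mul_pos h₁ h₂]

theorem half_log_combination_eq (hs : 3 ≤ s) (hr : s + 1 ≤ r) :
    (2 * Real.log (1 - rootSum r s * ((r - 1) * (s - 1))⁻¹
          + rootProd r s * ((r - 1) * (s - 1))⁻¹ ^ 2)
      - Real.log (1 - (rootSum r s ^ 2 - 2 * rootProd r s) * ((r - 1) * (s - 1))⁻¹
          + rootProd r s ^ 2 * ((r - 1) * (s - 1))⁻¹ ^ 2)
      - 2 * Real.log (1 - rootProd r s * ((r - 1) * (s - 1))⁻¹)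
      - Real.log (1 - ((r - 1) * (s - 1))⁻¹)) / 2
    = Real.log (r * (r * s - r - s) / ((r - 2) * √(Q r s))) := by
  have hm := mul_sub_sub_pos_of_three_le hs hr
  have hQ := Q_pos hs hr
  have hr₀ : 0 < r := by linarith
  have hr₁ : 0 < r - 1 := by linarith
  have hr₂ : 0 < r - 2 := by linarith
  have hs₁ : 0 < s - 1 := by linarith
  have hA : 1 - rootSum r s * ((r - 1) * (s - 1))⁻¹ + rootProd r s * ((r - 1) * (s - 1))⁻¹ ^ 2
      = r / (r - 1) := by
    rw [rootSum, rootProd]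
    generalize hm_def : r * s - r - s = m at hm ⊢
    field_simp
    subst hm_def
    ring
  have hB : 1 - (rootSum r s ^ 2 - 2 * rootProd r s) * ((r - 1) * (s - 1))⁻¹
      + rootProd r s ^ 2 * ((r - 1) * (s - 1))⁻¹ ^ 2
      = Q r s / ((r - 1) * (s - 1) * (r * s - r - s)) := by
    rw [rootSum, rootProd, Q]
    generalize hm_def : r * s - r - s = m at hm ⊢
    field_simp
    subst hm_def
    ring
  have hC : 1 - rootProd r s * ((r - 1) * (s - 1))⁻¹ = (r - 2) * (s - 1) / (r * s - r - s) := by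
    rw [rootProd]
    generalize hm_def : r * s - r - s = m at hm ⊢
    field_simp
    subst hm_def
    ring
  have hD : 1 - ((r - 1) * (s - 1))⁻¹ = (r * s - r - s) / ((r - 1) * (s - 1)) := by
    field_simp; ring
  rw [hA, hB, hC, hD, Real.log_div hr₀.ne' hr₁.ne', Real.log_div hQ.ne' (by positivity),
    Real.log_div (by positivity) hm.ne', Real.log_div hm.ne' (by positivity),
    Real.log_div (by positivity) (by positivity), Real.log_mul (by positivity) hm.ne',
    Real.log_mul hr₁.ne' hs₁.ne', Real.log_mul hr₂.ne' hs₁.ne', Real.log_mul hr₀.ne' hm.ne',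
    Real.log_mul hr₂.ne' (by positivity), Real.log_sqrt hQ.le]
  ring

theorem normSq_lt_of_rootSum_rootProd (hs : 3 ≤ s) (hr : s + 1 ≤ r) {ζ₁ ζ₂ : ℂ}
    (hσ : ζ₁ + ζ₂ = rootSum r s) (hP : ζ₁ * ζ₂ = rootProd r s) :
    normSq ζ₁ < (r - 1) * (s - 1) :=
  (normSq_le_max_of_add_of_mul hσ hP (rootProd_nonneg hs hr)).trans_lt
    (max_lt (rootSum_sq_lt hs hr) (rootProd_lt hs hr))

end Parameters

theorem stmt_5 (r s : ℤ) (hs : 3 ≤ s) (hr : s + 1 ≤ r) (ζ1 ζ2 : ℂ)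
    (hsum : ζ1 + ζ2 =
      -(((r * s ^ 2 - s ^ 2 - 2 * r * s + r + 2 : ℤ) : ℂ) / ((r * s - r - s : ℤ) : ℂ)))
    (hprod : ζ1 * ζ2 =
      (((s - 1) * (s - 2) * (r - 1) : ℤ) : ℂ) / ((r * s - r - s : ℤ) : ℂ)) :
    HasSum
      (fun k : ℕ =>
        ((((r - 1) * (s - 1) : ℤ) : ℝ) ^ (k + 1) / (2 * ((k : ℝ) + 1))) *
          (((ζ1 ^ (k + 1) + ζ2 ^ (k + 1)).re - 1) /
            (((r - 1) * (s - 1) : ℤ) : ℝ) ^ (k + 1)) ^ 2)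
      (Real.log (((r : ℝ) * ((r * s - r - s : ℤ) : ℝ)) /
        (((r : ℝ) - 2) *
          Real.sqrt ((r ^ 2 * s ^ 2 - r * s ^ 3 - 2 * r ^ 2 * s + 3 * r * s ^ 2 + s ^ 3
              + r ^ 2 - 6 * r * s + 4 * r - 4 * s + 4 : ℤ) : ℝ)))) := by
  have hs' : (3 : ℝ) ≤ s := by exact_mod_cast hs
  have hr' : (s : ℝ) + 1 ≤ r := by exact_mod_cast hr
  have hσ : ζ1 + ζ2 = (rootSum r s : ℂ) := by rw [hsum, rootSum]; push_cast; ring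
  have hP : ζ1 * ζ2 = (rootProd r s : ℂ) := by rw [hprod, rootProd]; push_cast; ring
  have ha : 1 < ((r : ℝ) - 1) * (s - 1) := by nlinarith
  have ha₀ : 0 < ((r : ℝ) - 1) * (s - 1) := one_pos.trans ha
  have hx : |(((r : ℝ) - 1) * (s - 1))⁻¹| < 1 := by
    rw [abs_inv, abs_of_pos ha₀]; exact inv_lt_one_of_one_lt₀ ha
  have hζ : ∀ ζ : ℂ, normSq ζ < ((r : ℝ) - 1) * (s - 1) →
      ‖ζ‖ ^ 2 * |(((r : ℝ) - 1) * (s - 1))⁻¹| < 1 := by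
    intro ζ h
    rwa [abs_inv, abs_of_pos ha₀, ← div_eq_mul_inv, div_lt_one ha₀, Complex.sq_norm]
  have key := (hasSum_re_pow_add_pow_sub_one_sq_mul_div hσ hP
    (hζ _ (normSq_lt_of_rootSum_rootProd hs' hr' hσ hP))
    (hζ _ (normSq_lt_of_rootSum_rootProd hs' hr' ((add_comm _ _).trans hσ)
      ((mul_comm _ _).trans hP)))
    hx).const_smul (2⁻¹ : ℝ)
  convert key using 1
  · funext k
    push_cast
    rw [smul_eq_mul, inv_pow]
    field_simp
  · rw [smul_eq_mul, inv_mul_eq_div, half_log_combination_eq hs' hr']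
    push_cast [Q]
    rfl
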